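/- Let A be the n×n matrix with ones on the superdiagonal and zeros elsewhere, and let E_{rs} = e_r e_s^T. Define H_{rs}^{(k)} = Σ_{p+q=k} A^p E_{rs} A^q. Then for every k with 0 ≤ k ≤ n-1, max over 1 ≤ r,s ≤ n of 1^T H_{rs}^{(k)} 1 equals k+1, and this maximum is attained at r = n, s = 1. -/

import Mathlib

/-- The n×n adjacency matrix of the directed path: ones on the superdiagonal. -/
def pathAdj (n : ℕ) : Matrix (Fin n) (Fin n) ℝ :=
  Matrix.of fun i j => if (i : ℕ) + 1 = (j : ℕ) then 1 else 0

/-- `H_{rs}^{(k)} = Σ_{p+q=k} A^p (e_r e_sᵀ) A^q`. -/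
def Hmat (n : ℕ) (r s : Fin n) (k : ℕ) : Matrix (Fin n) (Fin n) ℝ :=
  ∑ p ∈ Finset.range (k + 1),
    (pathAdj n) ^ p * Matrix.single r s (1 : ℝ) * (pathAdj n) ^ (k - p)

/-- `1ᵀ M 1`, the sum of all entries of a matrix. -/
def totSum {n : ℕ} (M : Matrix (Fin n) (Fin n) ℝ) : ℝ := ∑ i, ∑ j, M i j

/-! `A^p` is the matrix of `i ↦ i + p`, so a column sum of `A^p` at `r` is `[p ≤ r]` and a row
sum at `s` is `[s + q < n]`. Hence `1ᵀ (A^p e_r e_sᵀ A^q) 1 = [p ≤ r] [s + q < n] ≤ 1`, with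
`1ᵀ H_{rs}^{(k)} 1` the number of `p ≤ k` for which both indicators are `1`; for `r = n - 1`,
`s = 0` this holds for every `p ≤ k` as soon as `k < n`. -/

open Finset Matrix

theorem Fin.sum_ite_val_eq {M : Type*} [AddCommMonoid M] {n : ℕ} (m : ℕ) (f : Fin n → M) :
    ∑ i : Fin n, (if m = (i : ℕ) then f i else 0) = if h : m < n then f ⟨m, h⟩ else 0 := by
  split_ifs with h
  · calc ∑ i : Fin n, (if m = (i : ℕ) then f i else 0)
        = ∑ i, if (⟨m, h⟩ : Fin n) = i then f i else 0 := sum_congr rfl fun i _ => by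
          simp only [Fin.ext_iff]
      _ = f ⟨m, h⟩ := by simp
  · exact sum_eq_zero fun i _ => if_neg (by omega)

theorem Matrix.mul_single_one_mul_apply {l m n o α : Type*} [Fintype m] [Fintype n]
    [DecidableEq m] [DecidableEq n] [NonAssocSemiring α]
    (M : Matrix l m α) (N : Matrix n o α) (r : m) (s : n) (i : l) (j : o) :
    (M * single r s (1 : α) * N) i j = M i r * N s j := by
  rw [mul_apply, Fintype.sum_eq_single s fun b hb => by
    rw [mul_single_apply_of_ne _ _ _ _ _ hb, zero_mul]]
  rw [mul_single_apply_same, mul_one]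

theorem pathAdj_pow_apply (n p : ℕ) (i j : Fin n) :
    (pathAdj n ^ p) i j = if (i : ℕ) + p = j then 1 else 0 := by
  induction p generalizing j with
  | zero => simp [one_apply, Fin.ext_iff]
  | succ p ih =>
    rw [pow_succ, mul_apply]
    simp only [ih]
    simp only [pathAdj, of_apply, ite_mul, one_mul, zero_mul, Fin.sum_ite_val_eq]
    have := j.isLt
    split_ifs <;> first | rfl | omega

theorem sum_pathAdj_pow_col (n p : ℕ) (r : Fin n) :
    ∑ i, (pathAdj n ^ p) i r = if p ≤ r then 1 else 0 := by
  have hcol : ∀ i : Fin n, ((i : ℕ) + p = r ↔ r - p = (i : ℕ) ∧ p ≤ r) := fun i => by omega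
  simp only [pathAdj_pow_apply, hcol, ite_and, Fin.sum_ite_val_eq, dite_eq_ite]
  have := r.isLt
  split_ifs <;> first | rfl | omega

theorem sum_pathAdj_pow_row (n q : ℕ) (s : Fin n) :
    ∑ j, (pathAdj n ^ q) s j = if (s : ℕ) + q < n then 1 else 0 := by
  simp only [pathAdj_pow_apply, Fin.sum_ite_val_eq, dite_eq_ite]

theorem totSum_sum {n : ℕ} {ι : Type*} (F : Finset ι) (M : ι → Matrix (Fin n) (Fin n) ℝ) :
    totSum (∑ p ∈ F, M p) = ∑ p ∈ F, totSum (M p) := by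
  simp only [totSum, Matrix.sum_apply]
  exact (sum_congr rfl fun _ _ => sum_comm).trans sum_comm

theorem totSum_mul_single_one_mul {n : ℕ} (M N : Matrix (Fin n) (Fin n) ℝ) (r s : Fin n) :
    totSum (M * single r s 1 * N) = (∑ i, M i r) * ∑ j, N s j := by
  simp only [totSum, mul_single_one_mul_apply, sum_mul_sum]

theorem totSum_Hmat (n k : ℕ) (r s : Fin n) :
    totSum (Hmat n r s k) = #{p ∈ range (k + 1) | p ≤ (r : ℕ) ∧ (s : ℕ) + (k - p) < n} := by
  simp only [Hmat, totSum_sum, totSum_mul_single_one_mul, sum_pathAdj_pow_col,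
    sum_pathAdj_pow_row, ite_zero_mul_ite_zero, one_mul, sum_boole]

/-- for `0 ≤ k ≤ n-1`, the maximum over all `r, s` of `1ᵀ H_{rs}^{(k)} 1`
equals `k+1`, attained at `r = n`, `s = 1` (indices `n-1` and `0` in 0-based indexing). -/
theorem totSum_Hmat_max (n k : ℕ) (hn : 0 < n) (hk : k ≤ n - 1) :
    (∀ r s : Fin n, totSum (Hmat n r s k) ≤ (k : ℝ) + 1) ∧
    totSum (Hmat n (⟨n - 1, by omega⟩ : Fin n) (⟨0, hn⟩ : Fin n) k) = (k : ℝ) + 1 := by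
  refine ⟨fun r s => ?_, ?_⟩
  · rw [totSum_Hmat]
    exact_mod_cast (card_filter_le _ _).trans (card_range (k + 1)).le
  · rw [totSum_Hmat, filter_true_of_mem, card_range, Nat.cast_succ]
    intro p hp
    simp only [mem_range] at hp
    show p ≤ n - 1 ∧ 0 + (k - p) < n
    omega
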